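/- Let N ≥ 2, 1 < p ≤ N and p − 1 < q < q_c. Then the function U(x) = λ_{N,p,q} |x|^{−β_q} is a positive strong solution of (E) on ℝ^N ∖ {0}. -/

import Mathlib

open Metric Set Filter Topology MeasureTheory

/-- The vector field `x ↦ |∇u(x)|^{p-2} ∇u(x)`. -/
noncomputable def pGradField {N : ℕ} (p : ℝ) (u : EuclideanSpace ℝ (Fin N) → ℝ)
    (x : EuclideanSpace ℝ (Fin N)) : EuclideanSpace ℝ (Fin N) :=
  ‖gradient u x‖ ^ (p - 2) • gradient u x

/-- A strong solution of `(E) : -Δ_p u + |∇u|^q = 0` on an open set `G ⊆ ℝ^N`. -/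
def IsStrongSolution {N : ℕ} (p q : ℝ) (G : Set (EuclideanSpace ℝ (Fin N)))
    (u : EuclideanSpace ℝ (Fin N) → ℝ) : Prop :=
  ContDiffOn ℝ 1 u G ∧
  ContDiffOn ℝ 3 u {x | x ∈ G ∧ gradient u x ≠ 0} ∧
  ∀ x ∈ G, DifferentiableAt ℝ (pGradField p u) x ∧
    LinearMap.trace ℝ (EuclideanSpace ℝ (Fin N))
      (fderiv ℝ (pGradField p u) x : EuclideanSpace ℝ (Fin N) →ₗ[ℝ] EuclideanSpace ℝ (Fin N))
      = ‖gradient u x‖ ^ q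

/-- trace of a rank-one map `u ↦ f u • v`. -/
lemma trace_smulRight_clm {N : ℕ} (f : EuclideanSpace ℝ (Fin N) →L[ℝ] ℝ)
    (v : EuclideanSpace ℝ (Fin N)) :
    LinearMap.trace ℝ (EuclideanSpace ℝ (Fin N))
      ((f.smulRight v : EuclideanSpace ℝ (Fin N) →L[ℝ] EuclideanSpace ℝ (Fin N)) :
        EuclideanSpace ℝ (Fin N) →ₗ[ℝ] EuclideanSpace ℝ (Fin N)) = f v := by
  have h : ((f.smulRight v : EuclideanSpace ℝ (Fin N) →L[ℝ] EuclideanSpace ℝ (Fin N)) :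
        EuclideanSpace ℝ (Fin N) →ₗ[ℝ] EuclideanSpace ℝ (Fin N))
      = dualTensorHom ℝ _ _ ((f : EuclideanSpace ℝ (Fin N) →ₗ[ℝ] ℝ) ⊗ₜ[ℝ] v) :=
    LinearMap.ext fun u => by simp
  rw [h, LinearMap.trace_eq_contract_apply, contractLeft_apply]
  simp

lemma norm_sq_rpow {N : ℕ} (x : EuclideanSpace ℝ (Fin N)) (a : ℝ) :
    ((‖x‖ ^ 2 : ℝ)) ^ (a / 2) = ‖x‖ ^ a := by
  rw [← Real.rpow_natCast ‖x‖ 2, ← Real.rpow_mul (norm_nonneg x)]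
  norm_num
  congr 1
  ring

lemma hasGradientAt_const_mul_norm_rpow {N : ℕ} (c a : ℝ)
    {x : EuclideanSpace ℝ (Fin N)} (hx : x ≠ 0) :
    HasGradientAt (fun y => c * ‖y‖ ^ a) ((c * a * ‖x‖ ^ (a - 2)) • x) x := by
  have hx2 : (‖x‖ ^ 2 : ℝ) ≠ 0 := pow_ne_zero _ (norm_ne_zero_iff.mpr hx)
  have key : HasFDerivAt (fun y : EuclideanSpace ℝ (Fin N) => c * (‖y‖ ^ 2) ^ (a / 2))
      (c • ((a / 2 * (‖x‖ ^ 2) ^ (a / 2 - 1)) • (2 • innerSL ℝ x))) x :=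
    ((hasStrictFDerivAt_norm_sq x).hasFDerivAt.rpow_const (Or.inl hx2)).const_mul c
  have hfun : (fun y : EuclideanSpace ℝ (Fin N) => c * ‖y‖ ^ a)
      = fun y => c * (‖y‖ ^ 2) ^ (a / 2) := by
    funext y; rw [norm_sq_rpow]
  have hscal : ((‖x‖ ^ 2 : ℝ)) ^ (a / 2 - 1) = ‖x‖ ^ (a - 2) := by
    rw [← Real.rpow_natCast ‖x‖ 2, ← Real.rpow_mul (norm_nonneg x)]
    congr 1
    ring
  rw [hasGradientAt_iff_hasFDerivAt, hfun]
  refine key.congr_fderiv ?_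
  ext v
  simp [real_inner_smul_left, hscal, InnerProductSpace.toDual_apply_apply]
  ring

/-- The explicit singular solution `U(x) = λ_{N,p,q} |x|^{-β_q}` is a positive strong
solution of (E) on `ℝ^N ∖ {0}`. -/
theorem explicit_positive_singular_solution (N : ℕ) (hN : 2 ≤ N) (p q : ℝ) (hp1 : 1 < p)
    (hpN : p ≤ N) (hq1 : p - 1 < q) (hq2 : q < (N : ℝ) * (p - 1) / ((N : ℝ) - 1)) :
    IsStrongSolution p q ({(0 : EuclideanSpace ℝ (Fin N))}ᶜ)
      (fun x => ((p - q) / (q + 1 - p))⁻¹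
          * (((p - q) / (q + 1 - p)) * (p - 1) + p - (N : ℝ)) ^ (1 / (q + 1 - p))
          * ‖x‖ ^ (-((p - q) / (q + 1 - p)))) ∧
    ∀ x : EuclideanSpace ℝ (Fin N), x ≠ 0 →
      0 < ((p - q) / (q + 1 - p))⁻¹
          * (((p - q) / (q + 1 - p)) * (p - 1) + p - (N : ℝ)) ^ (1 / (q + 1 - p))
          * ‖x‖ ^ (-((p - q) / (q + 1 - p))) := by
  have hN1 : (1:ℝ) < (N:ℝ) := by exact_mod_cast Nat.lt_of_lt_of_le Nat.one_lt_two hN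
  set β : ℝ := (p - q) / (q + 1 - p) with hβdef
  set A : ℝ := β * (p - 1) + p - N with hAdef
  have hqp : (0:ℝ) < q + 1 - p := by linarith
  have hpq : q < p := by
    have h1 : (N:ℝ) * (p - 1) / ((N:ℝ) - 1) ≤ p := by
      rw [div_le_iff₀ (by linarith : (0:ℝ) < (N:ℝ) - 1)]
      nlinarith
    linarith
  have hβ : 0 < β := div_pos (by linarith) hqp
  have hβq : β * (q + 1 - p) = p - q := by rw [hβdef]; field_simp
  have hβ1 : (β + 1) * (q + 1 - p) = 1 := by linear_combination hβq
  have hA : 0 < A := by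
    have h1 : A * (q + 1 - p) = (N:ℝ) * (p - 1) - q * ((N:ℝ) - 1) := by
      rw [hAdef]; linear_combination (p - 1) * hβq
    have h2 : q * ((N:ℝ) - 1) < (N:ℝ) * (p - 1) := by
      have := (lt_div_iff₀ (by linarith : (0:ℝ) < (N:ℝ) - 1)).mp hq2
      linarith
    have h3 : 0 < A * (q + 1 - p) := by rw [h1]; linarith
    rcases mul_pos_iff.mp h3 with ⟨h, _⟩ | ⟨_, h⟩
    · exact h
    · linarith
  set lam : ℝ := β⁻¹ * A ^ (1 / (q + 1 - p)) with hlamdef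
  set K : ℝ := lam * β with hKdef
  have hlam : 0 < lam := mul_pos (inv_pos.mpr hβ) (Real.rpow_pos_of_pos hA _)
  have hK : 0 < K := mul_pos hlam hβ
  have hKA : K = A ^ (1 / (q + 1 - p)) := by
    rw [hKdef, hlamdef]; field_simp
  have hKpow : K ^ (q + 1 - p) = A := by
    rw [hKA, ← Real.rpow_mul hA.le, one_div, inv_mul_cancel₀ hqp.ne', Real.rpow_one]
  set u : EuclideanSpace ℝ (Fin N) → ℝ := fun x => lam * ‖x‖ ^ (-β) with hudef
  set m : ℝ := -(β + 1) * (p - 1) - 1 with hmdef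
  have hgradient : ∀ x : EuclideanSpace ℝ (Fin N), x ≠ 0 →
      gradient u x = (lam * (-β) * ‖x‖ ^ (-β - 2)) • x :=
    fun x hx => (hasGradientAt_const_mul_norm_rpow lam (-β) hx).gradient
  have hnorm : ∀ x : EuclideanSpace ℝ (Fin N), x ≠ 0 →
      ‖gradient u x‖ = K * ‖x‖ ^ (-β - 1) := by
    intro x hx
    have hr : 0 < ‖x‖ := norm_pos_iff.mpr hx
    rw [hgradient x hx, norm_smul, Real.norm_eq_abs, abs_mul, abs_mul,
      abs_of_pos hlam, abs_neg, abs_of_pos hβ,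
      abs_of_pos (Real.rpow_pos_of_pos hr _)]
    have h2 : ‖x‖ ^ (-β - 2) * ‖x‖ = ‖x‖ ^ (-β - 1) := by
      rw [← Real.rpow_add_one hr.ne']
      congr 1; ring
    rw [hKdef, mul_assoc, h2]
  have hpgf : ∀ x : EuclideanSpace ℝ (Fin N), x ≠ 0 →
      pGradField p u x = (-(K ^ (p - 1)) * ‖x‖ ^ m) • x := by
    intro x hx
    have hr : 0 < ‖x‖ := norm_pos_iff.mpr hx
    rw [pGradField, hnorm x hx, hgradient x hx, smul_smul]
    congr 1
    have e1 : (K * ‖x‖ ^ (-β - 1)) ^ (p - 2)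
        = K ^ (p - 2) * ‖x‖ ^ ((-β - 1) * (p - 2)) := by
      rw [Real.mul_rpow hK.le (Real.rpow_nonneg (norm_nonneg x) _),
        ← Real.rpow_mul (norm_nonneg x)]
    have e2 : ‖x‖ ^ ((-β - 1) * (p - 2)) * ‖x‖ ^ (-β - 2) = ‖x‖ ^ m := by
      rw [← Real.rpow_add hr, hmdef]
      congr 1; ring
    have e3 : K ^ (p - 2) * K = K ^ (p - 1) := by
      rw [← Real.rpow_add_one hK.ne']
      congr 1; ring
    have hK' : lam * (-β) = -K := by rw [hKdef]; ring
    rw [e1, hK']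
    calc K ^ (p - 2) * ‖x‖ ^ ((-β - 1) * (p - 2)) * (-K * ‖x‖ ^ (-β - 2))
        = -(K ^ (p - 2) * K) * (‖x‖ ^ ((-β - 1) * (p - 2)) * ‖x‖ ^ (-β - 2)) := by ring
      _ = -(K ^ (p - 1)) * ‖x‖ ^ m := by rw [e3, e2]
  have hcdAt : ∀ (n : WithTop ℕ∞) (x : EuclideanSpace ℝ (Fin N)), x ≠ 0 → ContDiffAt ℝ n u x := by
    intro n x hx
    have hx2 : (‖x‖ ^ 2 : ℝ) ≠ 0 := pow_ne_zero _ (norm_ne_zero_iff.mpr hx)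
    have hfun : u = fun y : EuclideanSpace ℝ (Fin N) => lam * (‖y‖ ^ 2) ^ ((-β) / 2) := by
      funext y; rw [hudef, norm_sq_rpow]
    rw [hfun]
    exact contDiffAt_const.mul (((contDiff_norm_sq ℝ).contDiffAt).rpow_const_of_ne hx2)
  refine ⟨⟨fun x hx => (hcdAt 1 x hx).contDiffWithinAt,
      fun x hx => (hcdAt 3 x hx.1).contDiffWithinAt, fun x hx => ?_⟩,
      fun x hx => mul_pos hlam (Real.rpow_pos_of_pos (norm_pos_iff.mpr hx) _)⟩
  have hx0 : x ≠ 0 := hx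
  have hr : 0 < ‖x‖ := norm_pos_iff.mpr hx0
  have hx2 : (‖x‖ ^ 2 : ℝ) ≠ 0 := pow_ne_zero _ hr.ne'
  set κ : ℝ := -(K ^ (p - 1)) with hκdef
  have heq : pGradField p u =ᶠ[𝓝 x]
      (fun y : EuclideanSpace ℝ (Fin N) => (κ * (‖y‖ ^ 2) ^ (m / 2)) • y) := by
    filter_upwards [isOpen_compl_singleton.mem_nhds hx] with y hy
    rw [hpgf y hy, norm_sq_rpow]
  have hs' : HasFDerivAt (fun y : EuclideanSpace ℝ (Fin N) => κ * (‖y‖ ^ 2) ^ (m / 2))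
      (κ • ((m / 2 * (‖x‖ ^ 2) ^ (m / 2 - 1)) • (2 • innerSL ℝ x))) x :=
    ((hasStrictFDerivAt_norm_sq x).hasFDerivAt.rpow_const (Or.inl hx2)).const_mul κ
  have hF : HasFDerivAt (fun y : EuclideanSpace ℝ (Fin N) => (κ * (‖y‖ ^ 2) ^ (m / 2)) • y)
      ((κ * (‖x‖ ^ 2) ^ (m / 2)) • ContinuousLinearMap.id ℝ (EuclideanSpace ℝ (Fin N)) +
        (κ • ((m / 2 * (‖x‖ ^ 2) ^ (m / 2 - 1)) • (2 • innerSL ℝ x))).smulRight x) x :=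
    hs'.smul (hasFDerivAt_id x)
  constructor
  · exact heq.differentiableAt_iff.mpr hF.differentiableAt
  · rw [heq.fderiv_eq, hF.fderiv]
    rw [ContinuousLinearMap.coe_add, map_add, ContinuousLinearMap.coe_smul, _root_.map_smul,
      ContinuousLinearMap.coe_id, LinearMap.trace_id, trace_smulRight_clm]
    have happ : (κ • ((m / 2 * (‖x‖ ^ 2) ^ (m / 2 - 1)) • (2 • innerSL ℝ x))) x
        = κ * (m / 2 * (‖x‖ ^ 2) ^ (m / 2 - 1) * (2 * ‖x‖ ^ 2)) := by
      rw [ContinuousLinearMap.smul_apply, ContinuousLinearMap.smul_apply,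
        ContinuousLinearMap.smul_apply, innerSL_apply_apply, real_inner_self_eq_norm_sq,
        smul_eq_mul, smul_eq_mul, nsmul_eq_mul]
      push_cast
      ring
    rw [happ, hnorm x hx0]
    have hmq : (-β - 1) * q = m := by rw [hmdef]; linear_combination (-1 : ℝ) * hβ1
    have hKq : K ^ q = K ^ (p - 1) * A := by
      rw [← hKpow, ← Real.rpow_add hK]; congr 1; ring
    have h52 : m / 2 - 1 = (m - 2) / 2 := by ring
    rw [norm_sq_rpow, h52, norm_sq_rpow,
      Real.mul_rpow hK.le (Real.rpow_nonneg (norm_nonneg x) _),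
      ← Real.rpow_mul (norm_nonneg x), hmq, hKq]
    have hxm : ‖x‖ ^ (m - 2) * ‖x‖ ^ (2 : ℕ) = ‖x‖ ^ m := by
      rw [← Real.rpow_natCast ‖x‖ 2, ← Real.rpow_add hr]; congr 1; norm_num
    have hNA : (N : ℝ) + m = -A := by rw [hmdef, hAdef]; ring
    have hsmul : (κ * ‖x‖ ^ m) • (Module.finrank ℝ (EuclideanSpace ℝ (Fin N)) : ℝ)
        = κ * ‖x‖ ^ m * N := by
      rw [finrank_euclideanSpace_fin, smul_eq_mul]
    rw [hsmul]
    calc κ * ‖x‖ ^ m * N + κ * (m / 2 * ‖x‖ ^ (m - 2) * (2 * ‖x‖ ^ 2))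
        = κ * ((N : ℝ) + m) * ‖x‖ ^ m := by
          rw [show m / 2 * ‖x‖ ^ (m - 2) * (2 * ‖x‖ ^ 2)
              = m * (‖x‖ ^ (m - 2) * ‖x‖ ^ (2 : ℕ)) from by ring, hxm]
          ring
      _ = K ^ (p - 1) * A * ‖x‖ ^ m := by rw [hNA, hκdef]; ring
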